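/- arXiv:math/0010142 — 3 statements merged into one kernel-verified Lean document; each statement's English description precedes it below -/
import Mathlib

section
/- Let X be a locally compact metrisable space with pairwise commuting continuous maps φ₁,…,φ_d : X → X, let J ⊆ {1,…,d} and x ∈ X. Suppose (p_k) is a sequence in ℕ^d whose j-th coordinate is strictly increasing in k for every j ∈ J and constant in k for every j ∉ J, and that φ_{p_k}(x) → x. Then for every open neighbourhood V of x there exist a sequence (n_k)_{k≥1} with n_k ∈ Δ_J for every k, and for every k ∈ ℕ a point x_k ∈ V, such that φ_s(x_k) ∈ V for every s ∈ S₀ ∪ S₁ ∪ ⋯ ∪ S_k, where (S_i) is the family of indices associated to (n_k). -/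
open Filter Topology Set

/-- `phiIter φ n = φ₁^[n₁] ∘ ⋯ ∘ φ_d^[n_d]`. -/
def phiIter {X : Type*} {d : ℕ} (φ : Fin d → X → X) (n : Fin d → ℕ) : X → X :=
  (List.ofFn fun j : Fin d => (φ j)^[n j]).foldr (· ∘ ·) id

/-- `m₀ = 0`, `m_k = n_k + 2 m_{k-1}`. -/
def assocM {d : ℕ} (n : ℕ → Fin d → ℕ) : ℕ → Fin d → ℕ
  | 0 => 0
  | k + 1 => n (k + 1) + 2 • assocM n k

/-- `assocU n k = S₀ ∪ ⋯ ∪ S_k`, the cumulative union of the family of indices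
associated to `(n_k)`:  `S₀ = {0}`, `S_{k+1} = n_{k+1} + m_k + (S₀ ∪ ⋯ ∪ S_k)`. -/
def assocU {d : ℕ} (n : ℕ → Fin d → ℕ) : ℕ → Finset (Fin d → ℕ)
  | 0 => {0}
  | k + 1 => assocU n k ∪ (assocU n k).image fun j => n (k + 1) + assocM n k + j

section aux

variable {X : Type*}

lemma iter_comm {f g : X → X} (h : ∀ z, f (g z) = g (f z)) (m : ℕ) :
    ∀ z, g (f^[m] z) = f^[m] (g z) := by
  induction m with
  | zero => intro z; simp
  | succ m ih =>
      intro z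
      rw [Function.iterate_succ_apply', Function.iterate_succ_apply', ← h, ih]

lemma cont_iter [TopologicalSpace X] {f : X → X} (h : Continuous f) :
    ∀ n, Continuous f^[n]
  | 0 => by simpa using continuous_id
  | n + 1 => by rw [Function.iterate_succ]; exact (cont_iter h n).comp h

lemma phiIter_succ_apply {d : ℕ} (φ : Fin (d + 1) → X → X) (n : Fin (d + 1) → ℕ) (z : X) :
    phiIter φ n z = (φ 0)^[n 0] (phiIter (fun j => φ j.succ) (fun j => n j.succ) z) := by
  simp [phiIter, List.ofFn_succ]

lemma phiIter_zero_apply : ∀ {d : ℕ} (φ : Fin d → X → X) (z : X), phiIter φ 0 z = z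
  | 0, φ, z => by simp [phiIter]
  | d + 1, φ, z => by
      rw [phiIter_succ_apply]
      exact phiIter_zero_apply _ z

lemma commute_phiIter :
    ∀ {d : ℕ} (φ : Fin d → X → X) (g : X → X), (∀ j z, g (φ j z) = φ j (g z)) →
      ∀ (m : Fin d → ℕ) (z : X), g (phiIter φ m z) = phiIter φ m (g z)
  | 0, φ, g, hg, m, z => by simp [phiIter]
  | d + 1, φ, g, hg, m, z => by
      rw [phiIter_succ_apply, phiIter_succ_apply]
      have h1 : ∀ w, g ((φ 0)^[m 0] w) = (φ 0)^[m 0] (g w) :=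
        iter_comm (fun w => (hg 0 w).symm) (m 0)
      rw [h1, commute_phiIter (fun j => φ j.succ) g (fun j w => hg j.succ w)]

lemma phiIter_add_apply' :
    ∀ {d : ℕ} (φ : Fin d → X → X), (∀ i j z, φ i (φ j z) = φ j (φ i z)) →
      ∀ (a b c : Fin d → ℕ), (∀ j, c j = a j + b j) →
        ∀ z : X, phiIter φ c z = phiIter φ a (phiIter φ b z)
  | 0, φ, _, a, b, c, _, z => by simp [phiIter]
  | d + 1, φ, hcomm, a, b, c, hc, z => by
      rw [phiIter_succ_apply φ c, phiIter_succ_apply φ a, phiIter_succ_apply φ b, hc 0,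
        Function.iterate_add_apply]
      congr 1
      have hrec := phiIter_add_apply' (fun j => φ j.succ)
        (fun i j w => hcomm i.succ j.succ w)
        (fun j => a j.succ) (fun j => b j.succ) (fun j => c j.succ)
        (fun j => hc j.succ) z
      rw [hrec]
      exact commute_phiIter (fun j => φ j.succ) ((φ 0)^[b 0])
        (fun j w => (iter_comm (fun u => hcomm 0 j.succ u) (b 0) w).symm) _ _

lemma phiIter_cont [TopologicalSpace X] :
    ∀ {d : ℕ} (φ : Fin d → X → X), (∀ j, Continuous (φ j)) →
      ∀ n : Fin d → ℕ, Continuous (phiIter φ n)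
  | 0, φ, _, n => by
      have : phiIter φ n = id := rfl
      rw [this]; exact continuous_id
  | d + 1, φ, h, n => by
      have he : phiIter φ n = fun z =>
          (φ 0)^[n 0] (phiIter (fun j => φ j.succ) (fun j => n j.succ) z) :=
        funext fun z => phiIter_succ_apply φ n z
      rw [he]
      exact (cont_iter (h 0) (n 0)).comp
        (phiIter_cont (fun j => φ j.succ) (fun j => h j.succ) _)

end aux

/-- Lemma 8 (Lemma `rec`) of Donsig–Katavolos–Manoussos: if `φ_{p_k}(x) → x` along a
sequence `(p_k)` strictly increasing in the directions of `J` and constant in the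
directions of `Jᶜ`, then for every open neighbourhood `V` of `x` there is a sequence
`(n_k)_{k ≥ 1}` with values in `Δ_J` and, for each `k`, a point `x_k ∈ V` with
`φ_s(x_k) ∈ V` for every `s ∈ S₀ ∪ ⋯ ∪ S_k`. -/
theorem recurrence_lemma {X : Type*} [TopologicalSpace X] [LocallyCompactSpace X]
    [TopologicalSpace.MetrizableSpace X] {d : ℕ}
    (φ : Fin d → X → X) (hcont : ∀ j, Continuous (φ j))
    (hcomm : ∀ i j, Function.Commute (φ i) (φ j))
    (J : Set (Fin d)) (x : X) (p : ℕ → Fin d → ℕ)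
    (hpJ : ∀ j ∈ J, StrictMono fun k => p k j)
    (hpJc : ∀ j ∉ J, ∀ k l : ℕ, p k j = p l j)
    (hlim : Tendsto (fun k => phiIter φ (p k) x) atTop (𝓝 x))
    (V : Set X) (hV : IsOpen V) (hxV : x ∈ V) :
    ∃ n : ℕ → Fin d → ℕ,
      (∀ k, 1 ≤ k → (∀ j ∈ J, 0 < n k j) ∧ (∀ j ∉ J, n k j = 0)) ∧
      ∃ xs : ℕ → X, ∀ k, xs k ∈ V ∧ ∀ s ∈ assocU n k, phiIter φ s (xs k) ∈ V := by
  classical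
  have hcomm' : ∀ i j z, φ i (φ j z) = φ j (φ i z) := fun i j z => hcomm i j z
  set R : (Fin d → ℕ) → Prop := fun t => phiIter φ t x ∈ V with hRdef
  have hadd : ∀ (a b : Fin d → ℕ) (z : X),
      phiIter φ (a + b) z = phiIter φ a (phiIter φ b z) :=
    fun a b z => phiIter_add_apply' φ hcomm' a b (a + b) (fun _ => rfl) z
  -- the key closure property of R
  have hRtail : ∀ s, R s → ∀ᶠ b in atTop, R (s + p b) := by
    intro s hs
    have hc : Continuous (phiIter φ s) := phiIter_cont φ hcont s
    have ht : Tendsto (fun b => phiIter φ (s + p b) x) atTop (𝓝 (phiIter φ s x)) := by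
      have h2 := (hc.tendsto x).comp hlim
      refine h2.congr fun b => ?_
      exact (hadd s (p b) x).symm
    exact ht.eventually_mem (hV.mem_nhds hs)
  have hsingle : ∀ s : Fin d → ℕ, ∃ A, ∀ b ≥ A, R s → R (s + p b) := by
    intro s
    by_cases h : R s
    · obtain ⟨A, hA⟩ := eventually_atTop.mp (hRtail s h)
      exact ⟨A, fun b hb _ => hA b hb⟩
    · exact ⟨0, fun b _ hh => absurd hh h⟩
  choose g hg using hsingle
  -- monotone growth of p in the J directions
  have hle : ∀ j ∈ J, ∀ b : ℕ, b ≤ p b j := by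
    intro j hj b
    induction b with
    | zero => exact Nat.zero_le _
    | succ b ih => exact Nat.succ_le_of_lt (lt_of_le_of_lt ih (hpJ j hj (Nat.lt_succ_self b)))
  -- choice of a good pair of indices
  have hpair : ∀ (S : Finset (Fin d → ℕ)) (m : Fin d → ℕ), ∃ u v : ℕ,
      (∀ s ∈ S, R s → R (s + p u)) ∧ (∀ s ∈ S, R s → R (s + p v)) ∧
      (∀ j ∈ J, p u j + m j < p v j) ∧ (∀ j, p u j ≤ p v j) := by
    intro S m
    set A := S.sup g with hA
    have hAthr : ∀ b ≥ A, ∀ s ∈ S, R s → R (s + p b) := by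
      intro b hb s hs hRs
      exact hg s b (le_trans (Finset.le_sup hs) hb) hRs
    set M := Finset.univ.sup (fun j => p A j + m j) with hM
    set B := A + M + 1 with hB
    refine ⟨A, B, fun s hs hRs => hAthr A le_rfl s hs hRs,
      fun s hs hRs => hAthr B (by omega) s hs hRs, ?_, ?_⟩
    · intro j hj
      have h1 : p A j + m j ≤ M := by
        rw [hM]; exact Finset.le_sup (f := fun j => p A j + m j) (Finset.mem_univ j)
      have h2 : B ≤ p B j := hle j hj B
      omega
    · intro j
      by_cases hj : j ∈ J
      · exact (hpJ j hj (show A < B by omega)).le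
      · exact (hpJc j hj A B).le
  choose pu pv hp1 hp2 hp3 hp4 using hpair
  -- the recursive state: (good sums, current m, current t)
  obtain ⟨F, hF0, hFs⟩ :
      ∃ Fn : ℕ → Finset (Fin d → ℕ) × ((Fin d → ℕ) × (Fin d → ℕ)),
        Fn 0 = ({0}, 0, 0) ∧ ∀ k, Fn (k + 1) =
          ((Fn k).1.image (fun z => z + p (pu (Fn k).1 (Fn k).2.1)) ∪
            (Fn k).1.image (fun z => z + p (pv (Fn k).1 (Fn k).2.1)),
           (Fn k).2.1 + (p (pv (Fn k).1 (Fn k).2.1) - p (pu (Fn k).1 (Fn k).2.1)),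
           (Fn k).2.2 + p (pu (Fn k).1 (Fn k).2.1)) := by
    refine ⟨fun k => (fun st : Finset (Fin d → ℕ) × ((Fin d → ℕ) × (Fin d → ℕ)) =>
      (st.1.image (fun z => z + p (pu st.1 st.2.1)) ∪
        st.1.image (fun z => z + p (pv st.1 st.2.1)),
       st.2.1 + (p (pv st.1 st.2.1) - p (pu st.1 st.2.1)),
       st.2.2 + p (pu st.1 st.2.1)))^[k] ({0}, 0, 0), rfl, fun k => ?_⟩
    exact Function.iterate_succ_apply' _ k _
  obtain ⟨n, hn0, hnS⟩ :
      ∃ nn : ℕ → Fin d → ℕ, nn 0 = 0 ∧ ∀ k, nn (k + 1) =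
        p (pv (F k).1 (F k).2.1) - p (pu (F k).1 (F k).2.1) - (F k).2.1 :=
    ⟨fun k => match k with
      | 0 => 0
      | k + 1 => p (pv (F k).1 (F k).2.1) - p (pu (F k).1 (F k).2.1) - (F k).2.1,
     rfl, fun k => rfl⟩
  -- the invariants
  have inv : ∀ k, (∀ s ∈ (F k).1, R s) ∧ (∀ j, j ∉ J → (F k).2.1 j = 0) ∧
      assocM n k = (F k).2.1 ∧ (∀ s ∈ assocU n k, s + (F k).2.2 ∈ (F k).1) := by
    intro k
    induction k with
    | zero =>
        rw [hF0]
        refine ⟨?_, ?_, ?_, ?_⟩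
        · intro s hs
          rw [Finset.mem_singleton] at hs
          subst hs
          show phiIter φ 0 x ∈ V
          rw [phiIter_zero_apply]; exact hxV
        · intro j _; rfl
        · rfl
        · intro s hs
          have : s = 0 := by simpa [assocU] using hs
          subst this
          simp
    | succ k ih =>
        obtain ⟨iha, ihb, ihc, ihd⟩ := ih
        have h3 := hp3 (F k).1 (F k).2.1
        have h4 := hp4 (F k).1 (F k).2.1
        have hmle : ∀ j, (F k).2.1 j ≤
            p (pv (F k).1 (F k).2.1) j - p (pu (F k).1 (F k).2.1) j := by
          intro j
          by_cases hj : j ∈ J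
          · have := h3 j hj; omega
          · have := ihb j hj; omega
        refine ⟨?_, ?_, ?_, ?_⟩
        · intro s' hs'
          rw [hFs k] at hs'
          rcases Finset.mem_union.mp hs' with h | h <;>
            obtain ⟨s, hs, rfl⟩ := Finset.mem_image.mp h
          · exact hp1 (F k).1 (F k).2.1 s hs (iha s hs)
          · exact hp2 (F k).1 (F k).2.1 s hs (iha s hs)
        · intro j hj
          rw [hFs k]
          have hv := hpJc j hj (pu (F k).1 (F k).2.1) (pv (F k).1 (F k).2.1)
          have := ihb j hj
          show (F k).2.1 j + (p (pv (F k).1 (F k).2.1) j - p (pu (F k).1 (F k).2.1) j) = 0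
          omega
        · show assocM n (k + 1) = _
          rw [hFs k]
          show n (k + 1) + 2 • assocM n k = _
          rw [hnS k, ihc]
          funext j
          have := hmle j
          have := h4 j
          show (p (pv (F k).1 (F k).2.1) j - p (pu (F k).1 (F k).2.1) j - (F k).2.1 j)
              + 2 * (F k).2.1 j
            = (F k).2.1 j + (p (pv (F k).1 (F k).2.1) j - p (pu (F k).1 (F k).2.1) j)
          omega
        · intro s hs
          have hs' : s ∈ assocU n k ∪ (assocU n k).image
              (fun j => n (k + 1) + assocM n k + j) := hs
          rw [hFs k]
          rcases Finset.mem_union.mp hs' with h | h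
          · refine Finset.mem_union_left _ (Finset.mem_image.mpr ⟨s + (F k).2.2, ihd s h, ?_⟩)
            show s + (F k).2.2 + p (pu (F k).1 (F k).2.1)
              = s + ((F k).2.2 + p (pu (F k).1 (F k).2.1))
            rw [add_assoc]
          · obtain ⟨s₀, hs₀, rfl⟩ := Finset.mem_image.mp h
            refine Finset.mem_union_right _
              (Finset.mem_image.mpr ⟨s₀ + (F k).2.2, ihd s₀ hs₀, ?_⟩)
            rw [hnS k, ihc]
            funext j
            have := hmle j
            have := h4 j
            show s₀ j + (F k).2.2 j + p (pv (F k).1 (F k).2.1) j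
              = p (pv (F k).1 (F k).2.1) j - p (pu (F k).1 (F k).2.1) j - (F k).2.1 j
                + (F k).2.1 j + s₀ j + ((F k).2.2 j + p (pu (F k).1 (F k).2.1) j)
            omega
  have h0mem : ∀ k, (0 : Fin d → ℕ) ∈ assocU n k := by
    intro k
    induction k with
    | zero => simp [assocU]
    | succ k ih => exact Finset.mem_union_left _ ih
  refine ⟨n, ?_, fun k => phiIter φ ((F k).2.2) x, ?_⟩
  · rintro (_ | k) hk
    · omega
    have h3 := hp3 (F k).1 (F k).2.1
    have hb := (inv k).2.1
    constructor
    · intro j hj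
      have := h3 j hj
      rw [hnS k]
      show 0 < p (pv (F k).1 (F k).2.1) j - p (pu (F k).1 (F k).2.1) j - (F k).2.1 j
      omega
    · intro j hj
      have hv := hpJc j hj (pv (F k).1 (F k).2.1) (pu (F k).1 (F k).2.1)
      rw [hnS k]
      show p (pv (F k).1 (F k).2.1) j - p (pu (F k).1 (F k).2.1) j - (F k).2.1 j = 0
      omega
  · intro k
    obtain ⟨iha, _, _, ihd⟩ := inv k
    constructor
    · have h0 := ihd 0 (h0mem k)
      rw [zero_add] at h0
      exact iha _ h0
    · intro s hs
      have hmem := ihd s hs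
      have hR := iha _ hmem
      have : phiIter φ (s + (F k).2.2) x = phiIter φ s (phiIter φ ((F k).2.2) x) :=
        hadd s ((F k).2.2) x
      rw [← this]
      exact hR
end

section
/- Let X be a locally compact metrisable space with pairwise commuting continuous maps φ₁,…,φ_d : X → X and let J ⊆ {1,…,d}. If X contains no nonempty J-wandering open set, then the set X_{Jr} of J-recurrent points is dense in X. -/
open Filter Topology Set

/-- A point is `J`-recurrent if `φ_{n_k}(x) → x` along a sequence strictly
increasing in the directions of `J`. -/
def JRecurrent {X : Type*} [TopologicalSpace X] {d : ℕ} (φ : Fin d → X → X)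
    (J : Set (Fin d)) (x : X) : Prop :=
  ∃ n : ℕ → Fin d → ℕ, (∀ j ∈ J, StrictMono fun k => n k j) ∧
    Tendsto (fun k => phiIter φ (n k) x) atTop (𝓝 x)

/-!
Fix a metric. For a depth `N` and radius `ε`, the points `x` with `dist (φ_n x) x < ε` for some `n`
whose `J`-coordinates are all `≥ N` form an open set, and it is dense: applying non-wandering
repeatedly to `V ∩ φ_m⁻¹ V` (with `φ_{m+n} = φ_m ∘ φ_n`) yields returns of any depth into any small
ball. Locally compact Hausdorff spaces are Baire, so the countable intersection over `N` and
`ε = 1/(k+1)` is dense, and its points have returns of every depth into every neighbourhood,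
from which a sequence increasing in every `J`-coordinate is extracted.
-/

section phiIter

variable {X : Type*}

@[simp]
lemma phiIter_zero_dim (φ : Fin 0 → X → X) (n : Fin 0 → ℕ) : phiIter φ n = id := by
  simp [phiIter]

lemma phiIter_succ_dim {d : ℕ} (φ : Fin (d + 1) → X → X) (n : Fin (d + 1) → ℕ) :
    phiIter φ n = (φ 0)^[n 0] ∘ phiIter (fun j => φ j.succ) (fun j => n j.succ) := by
  simp [phiIter, List.ofFn_succ]

lemma continuous_phiIter [TopologicalSpace X] {d : ℕ} {φ : Fin d → X → X}
    (hcont : ∀ j, Continuous (φ j)) (n : Fin d → ℕ) : Continuous (phiIter φ n) := by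
  induction d with
  | zero => simpa using continuous_id
  | succ d ih =>
    rw [phiIter_succ_dim]
    exact ((hcont 0).iterate _).comp (ih (fun j => hcont j.succ) _)

lemma Function.Commute.phiIter_right {d : ℕ} {φ : Fin d → X → X} {g : X → X}
    (h : ∀ j, Function.Commute g (φ j)) (n : Fin d → ℕ) : Function.Commute g (phiIter φ n) := by
  induction d with
  | zero => rw [phiIter_zero_dim]; exact Function.Commute.id_right
  | succ d ih =>
    rw [phiIter_succ_dim]
    exact ((h 0).iterate_right _).comp_right (ih (fun j => h j.succ) _)

lemma phiIter_add {d : ℕ} {φ : Fin d → X → X} (hcomm : ∀ i j, Function.Commute (φ i) (φ j))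
    (a b : Fin d → ℕ) : phiIter φ (a + b) = phiIter φ a ∘ phiIter φ b := by
  induction d with
  | zero => simp
  | succ d ih =>
    have hb : Function.Commute ((φ 0)^[b 0]) (phiIter (fun j => φ j.succ) fun j => a j.succ) :=
      Function.Commute.phiIter_right (fun j => (hcomm 0 j.succ).iterate_left _) _
    simp only [phiIter_succ_dim, Pi.add_apply, Function.iterate_add]
    rw [show (fun j : Fin d => a j.succ + b j.succ) = (fun j => a j.succ) + fun j => b j.succ
      from rfl, ih fun i j => hcomm i.succ j.succ]
    funext x
    exact congrArg _ (hb.eq _)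

end phiIter

section Recurrence

variable {X : Type*} [TopologicalSpace X] {d : ℕ} {φ : Fin d → X → X} {J : Set (Fin d)}

def JWandering (φ : Fin d → X → X) (J : Set (Fin d)) (V : Set X) : Prop :=
  ∀ n : Fin d → ℕ, (∀ j ∈ J, 0 < n j) → phiIter φ n ⁻¹' V ∩ V = ∅

lemma JRecurrent_of_forall_nhds [FirstCountableTopology X] {x : X}
    (h : ∀ N : ℕ, ∀ U ∈ 𝓝 x, ∃ n : Fin d → ℕ, (∀ j ∈ J, N ≤ n j) ∧ phiIter φ n x ∈ U) :
    JRecurrent φ J x := by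
  obtain ⟨s, hs⟩ := (𝓝 x).exists_antitone_basis
  choose f hf using fun N k => h N (s k) (hs.mem k)
  let n : ℕ → Fin d → ℕ := fun k =>
    Nat.rec (f 0 0) (fun k m => f (Finset.univ.sup m + 1) (k + 1)) k
  refine ⟨n, fun j hj => strictMono_nat_of_lt_succ fun k => ?_, hs.tendsto fun k => ?_⟩
  · calc n k j ≤ Finset.univ.sup (n k) := Finset.le_sup (Finset.mem_univ j)
      _ < Finset.univ.sup (n k) + 1 := Nat.lt_succ_self _
      _ ≤ n (k + 1) j := (hf _ _).1 j hj
  · cases k with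
    | zero => exact (hf 0 0).2
    | succ k => exact (hf _ _).2

lemma exists_deep_return (hcont : ∀ j, Continuous (φ j))
    (hcomm : ∀ i j, Function.Commute (φ i) (φ j))
    (hnw : ∀ V : Set X, IsOpen V → JWandering φ J V → V = ∅)
    (N : ℕ) {V : Set X} (hV : IsOpen V) (hne : V.Nonempty) :
    ∃ m : Fin d → ℕ, (∀ j ∈ J, N ≤ m j) ∧ (V ∩ phiIter φ m ⁻¹' V).Nonempty := by
  have return_of_open {W : Set X} (hW : IsOpen W) (hne : W.Nonempty) :
      ∃ n : Fin d → ℕ, (∀ j ∈ J, 0 < n j) ∧ (W ∩ phiIter φ n ⁻¹' W).Nonempty := by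
    by_contra! h
    exact hne.ne_empty <| hnw W hW fun n hn => by rw [inter_comm]; exact h n hn
  induction N generalizing V with
  | zero =>
    obtain ⟨n, -, hn⟩ := return_of_open hV hne
    exact ⟨n, fun _ _ => Nat.zero_le _, hn⟩
  | succ N ih =>
    obtain ⟨m, hmN, hm⟩ := ih hV hne
    obtain ⟨n, hn0, x, ⟨hxV, -⟩, hnx⟩ :=
      return_of_open (hV.inter ((continuous_phiIter hcont m).isOpen_preimage V hV)) hm
    refine ⟨m + n, fun j hj => Nat.add_le_add (hmN j hj) (hn0 j hj), x, hxV, ?_⟩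
    rw [mem_preimage, phiIter_add hcomm]
    exact hnx.2

end Recurrence

section NearReturn

variable {X : Type*} [PseudoMetricSpace X] {d : ℕ} {φ : Fin d → X → X} {J : Set (Fin d)}

def nearReturnSet (φ : Fin d → X → X) (J : Set (Fin d)) (N : ℕ) (ε : ℝ) : Set X :=
  {x | ∃ n : Fin d → ℕ, (∀ j ∈ J, N ≤ n j) ∧ dist (phiIter φ n x) x < ε}

lemma isOpen_nearReturnSet (hcont : ∀ j, Continuous (φ j)) (N : ℕ) (ε : ℝ) :
    IsOpen (nearReturnSet φ J N ε) := by
  simp only [nearReturnSet, ofPred_exists]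
  exact isOpen_iUnion fun n =>
    isOpen_const.inter (isOpen_lt ((continuous_phiIter hcont n).dist continuous_id) continuous_const)

lemma dense_nearReturnSet (hcont : ∀ j, Continuous (φ j))
    (hcomm : ∀ i j, Function.Commute (φ i) (φ j))
    (hnw : ∀ V : Set X, IsOpen V → JWandering φ J V → V = ∅) (N : ℕ) {ε : ℝ} (hε : 0 < ε) :
    Dense (nearReturnSet φ J N ε) := by
  refine dense_iff_inter_open.2 fun U hU ⟨y, hy⟩ => ?_
  obtain ⟨n, hnN, x, ⟨hxU, hxy⟩, hnxU, hnxy⟩ :=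
    exists_deep_return hcont hcomm hnw N (hU.inter (Metric.isOpen_ball (x := y) (ε := ε / 2)))
      ⟨y, hy, Metric.mem_ball_self (half_pos hε)⟩
  refine ⟨x, hxU, n, hnN, ?_⟩
  calc dist (phiIter φ n x) x ≤ dist (phiIter φ n x) y + dist x y := dist_triangle_right _ _ _
    _ < ε / 2 + ε / 2 := add_lt_add hnxy hxy
    _ = ε := add_halves ε

end NearReturn

/-- Proposition 11 (`wandrec`): if the system has no nonempty `J`-wandering open set,
then the `J`-recurrent points are dense. -/
theorem dense_JRecurrent_of_no_wandering {X : Type*} [TopologicalSpace X]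
    [LocallyCompactSpace X] [TopologicalSpace.MetrizableSpace X] {d : ℕ}
    (φ : Fin d → X → X) (hcont : ∀ j, Continuous (φ j))
    (hcomm : ∀ i j, Function.Commute (φ i) (φ j))
    (J : Set (Fin d))
    (hnw : ∀ V : Set X, IsOpen V →
      (∀ n : Fin d → ℕ, (∀ j ∈ J, 0 < n j) → phiIter φ n ⁻¹' V ∩ V = ∅) → V = ∅) :
    Dense {x : X | JRecurrent φ J x} := by
  let : MetricSpace X := TopologicalSpace.metrizableSpaceMetric X
  have hdense : Dense (⋂ p : ℕ × ℕ, nearReturnSet φ J p.1 (1 / (p.2 + 1))) :=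
    dense_iInter_of_isOpen (fun _ => isOpen_nearReturnSet hcont _ _)
      (fun _ => dense_nearReturnSet hcont hcomm hnw _ Nat.one_div_pos_of_nat)
  refine hdense.mono fun x hx => JRecurrent_of_forall_nhds fun N U hU => ?_
  obtain ⟨k, -, hkU⟩ := Metric.nhds_basis_ball_inv_nat_succ.mem_iff.1 hU
  obtain ⟨n, hnN, hn⟩ := mem_iInter.1 hx (N, k)
  exact ⟨n, hnN, hkU hn⟩
end

section
/- Let X be a locally compact metrisable space with pairwise commuting continuous maps φ₁,…,φ_d : X → X, let J ⊆ {1,…,d}, and let Y ⊆ X be a closed invariant set. Let f : X → ℂ be a continuous function with compact support whose support is disjoint from N_J(Y). Then there exist finitely many continuous functions f₁,…,f_m : X → ℂ with compact support and open sets V₁,…,V_m ⊆ X such that f = f₁ + ⋯ + f_m, the support of f_k is contained in V_k for each k, and each V_k ∩ Y is J-wandering for the subsystem on Y, i.e. for every n ∈ Σ_J there is no z ∈ V_k ∩ Y with φ_n(z) ∈ V_k ∩ Y. -/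
open Filter Topology Set

/-- `NJ φ J Y` is the set of points of `Y` which are *not* `J`-wandering for the
subsystem on `Y`. -/
def NJ {X : Type*} [TopologicalSpace X] {d : ℕ} (φ : Fin d → X → X)
    (J : Set (Fin d)) (Y : Set X) : Set X :=
  {y ∈ Y | ∀ V : Set X, IsOpen V → y ∈ V →
    ∃ n : Fin d → ℕ, (∀ j ∈ J, 0 < n j) ∧ ∃ z ∈ V ∩ Y, phiIter φ n z ∈ V ∩ Y}

/-- Lemma 18 (`prad4`): a compactly supported continuous function whose support is
disjoint from `N_J(Y)` is a finite sum of compactly supported continuous functions,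
each supported in an open set `V_k` such that `V_k ∩ Y` is `J`-wandering for the
subsystem on `Y`. -/
theorem partition_into_wandering_supports {X : Type*} [TopologicalSpace X]
    [LocallyCompactSpace X] [TopologicalSpace.MetrizableSpace X] {d : ℕ}
    (φ : Fin d → X → X) (hcont : ∀ j, Continuous (φ j))
    (hcomm : ∀ i j, Function.Commute (φ i) (φ j)) (J : Set (Fin d))
    (Y : Set X) (hYc : IsClosed Y) (hYinv : ∀ n : Fin d → ℕ, phiIter φ n '' Y ⊆ Y)
    (f : X → ℂ) (hf : Continuous f) (hfc : HasCompactSupport f)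
    (hsupp : tsupport f ∩ NJ φ J Y = ∅) :
    ∃ (m : ℕ) (g : Fin m → X → ℂ) (V : Fin m → Set X),
      f = ∑ k, g k ∧
      (∀ k, Continuous (g k)) ∧ (∀ k, HasCompactSupport (g k)) ∧
      (∀ k, IsOpen (V k)) ∧ (∀ k, tsupport (g k) ⊆ V k) ∧
      (∀ k, ∀ n : Fin d → ℕ, (∀ j ∈ J, 0 < n j) →
        ∀ z ∈ V k ∩ Y, phiIter φ n z ∉ V k ∩ Y) := by
  classical
  letI := TopologicalSpace.metrizableSpaceMetric X
  -- Every point has a "wandering" open set, containing it if it lies in `tsupport f`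
  have key : ∀ x : X, ∃ V : Set X, IsOpen V ∧ (x ∈ tsupport f → x ∈ V) ∧
      ∀ n : Fin d → ℕ, (∀ j ∈ J, 0 < n j) → ∀ z ∈ V ∩ Y, phiIter φ n z ∉ V ∩ Y := by
    intro x
    by_cases hx : x ∈ tsupport f
    · by_cases hxY : x ∈ Y
      · have hxN : x ∉ NJ φ J Y := fun h =>
          (eq_empty_iff_forall_notMem.1 hsupp x) ⟨hx, h⟩
        simp only [NJ, mem_setOf_eq, hxY, true_and, not_forall] at hxN
        obtain ⟨V, hVo, hxV, hV⟩ := hxN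
        push_neg at hV
        exact ⟨V, hVo, fun _ => hxV, fun n hn z hz hz' => hV n hn z hz hz'⟩
      · exact ⟨Yᶜ, hYc.isOpen_compl, fun _ => hxY, fun n hn z hz => (hz.1 hz.2).elim⟩
    · exact ⟨∅, isOpen_empty, fun h => (hx h).elim, fun n hn z hz => hz.1.elim⟩
  choose W hWo hWmem hWw using key
  -- finite subcover of the compact support
  obtain ⟨t, htcov⟩ := hfc.elim_nhds_subcover' (fun x _ => W x)
    (fun x hx => (hWo x).mem_nhds (hWmem x hx))
  set m := t.card with hm
  let e : Fin m ≃ {x // x ∈ t} := t.equivFin.symm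
  set V : Fin m → Set X := fun k => W ((e k : {x // x ∈ tsupport f}) : X) with hV
  have hVo : ∀ k, IsOpen (V k) := fun k => hWo _
  have hcov : tsupport f ⊆ ⋃ k, V k := by
    intro y hy
    obtain ⟨s, hs, hys⟩ := mem_iUnion₂.1 (htcov hy)
    exact mem_iUnion.2 ⟨e.symm ⟨s, hs⟩, by simpa [V] using hys⟩
  obtain ⟨ρ, hρsupp, hρone, hρmem, hρcp⟩ :=
    exists_continuous_sum_one_of_isOpen_isCompact hVo hfc hcov
  refine ⟨m, fun k x => (ρ k x : ℂ) * f x, V, ?_, ?_, ?_, hVo, ?_, ?_⟩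
  · funext x
    by_cases hx : x ∈ tsupport f
    · have h1 : ∑ k, ρ k x = 1 := by simpa using hρone hx
      simp only [Finset.sum_apply]
      rw [← Finset.sum_mul, ← Complex.ofReal_sum, h1]
      simp
    · have hfx : f x = 0 := image_eq_zero_of_notMem_tsupport hx
      simp [hfx]
  · exact fun k => (Complex.continuous_ofReal.comp (ρ k).continuous).mul hf
  · intro k
    exact (hρcp k).mono (fun x hx => by
      simp only [Function.mem_support] at hx ⊢
      exact fun h => hx (by simp [h]))
  · intro k
    refine subset_trans (closure_mono ?_) (hρsupp k)
    intro x hx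
    simp only [Function.mem_support] at hx ⊢
    exact fun h => hx (by simp [h])
  · intro k n hn z hz hz'
    exact hWw _ n hn z hz hz'
end
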